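/- arXiv:0807.0484 — 3 statements merged into one kernel-verified Lean document; each statement's English description precedes it below -/
import Mathlib

section
/- Let s ≥ 3, and let k₁ ≥ 1, k₂ ≥ 1, k₃ ≥ 3, t ≥ 1, m ≥ 1 be integers; set k = k₂·k₃ + 2k₁ − 3k₂ − k₃ + 2 and b = ⌈m/t⌉. Then N^s_k(m) ≤ b·(N^s_k(t) + 2·N^{s−1}_{k₁}(t) + N^{s−2}_{k₂}(t)) + N^s_{k₃}(b) (an inequality in the extended naturals). -/
/-- The alternating list `a b a b ...` of length `l`. -/
def altList (a b : ℕ) : ℕ → List ℕ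
  | 0 => []
  | l + 1 => a :: altList b a l

/-- `S` contains an alternation of length `l`: two distinct symbols occur as an
alternating (not necessarily contiguous) subsequence of length `l`. -/
def HasAlt (S : List ℕ) (l : ℕ) : Prop :=
  ∃ a b : ℕ, a ≠ b ∧ (altList a b l).Sublist S

/-- A Davenport–Schinzel sequence of order `s`: no two adjacent equal entries and
no alternation of length `s + 2`. -/
def IsDS (s : ℕ) (S : List ℕ) : Prop :=
  List.Chain' (· ≠ ·) S ∧ ¬ HasAlt S (s + 2)

/-- `S` can be partitioned into at most `m` contiguous blocks, each consisting of
pairwise distinct symbols. -/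
def HasBlocks (S : List ℕ) (m : ℕ) : Prop :=
  ∃ Bs : List (List ℕ), Bs.length ≤ m ∧ S = Bs.flatten ∧ ∀ B ∈ Bs, B.Nodup

/-- `λ_s(n)`: maximum length of a Davenport–Schinzel sequence of order `s`
using at most `n` distinct symbols. -/
noncomputable def lambdaDS (s n : ℕ) : ℕ :=
  sSup {L | ∃ S : List ℕ, IsDS s S ∧ S.toFinset.card ≤ n ∧ S.length = L}

/-- `ψ_s(m,n)`: maximum length of a Davenport–Schinzel sequence of order `s` on at
most `n` distinct symbols partitionable into at most `m` blocks of distinct symbols. -/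
noncomputable def psiDS (s m n : ℕ) : ℕ :=
  sSup {L | ∃ S : List ℕ, IsDS s S ∧ S.toFinset.card ≤ n ∧ HasBlocks S m ∧ S.length = L}

/-- The Ackermann hierarchy: `A_1(n) = 2n`, and `A_k(n) = A_{k-1}^{(n)}(1)` for `k ≥ 2`. -/
def Ak : ℕ → ℕ → ℕ
  | 0, n => n + 1
  | 1, n => 2 * n
  | k + 2, n => (Ak (k + 1))^[n] 1

/-- The Ackermann function `A(n) = A_n(3)`. -/
def AckF (n : ℕ) : ℕ := Ak n 3

/-- `α_k(x) = min {n | A_k(n) ≥ x}`. -/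
noncomputable def invAk (k x : ℕ) : ℕ := sInf {n | x ≤ Ak k n}

/-- `α(x) = min {n | A(n) ≥ x}`. -/
noncomputable def invA (x : ℕ) : ℕ := sInf {n | x ≤ AckF n}

/-- An `ADS^s_k(m)`-sequence: at most `m` blocks of distinct symbols, every occurring
symbol appears at least `k` times, and no alternation of length `s + 2`. -/
def IsADS (s k m : ℕ) (S : List ℕ) : Prop :=
  HasBlocks S m ∧ (∀ a ∈ S, k ≤ S.count a) ∧ ¬ HasAlt S (s + 2)

/-- `N^s_k(m)`: the supremum (possibly infinite) of the number of distinct symbols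
in an `ADS^s_k(m)`-sequence. -/
noncomputable def NADS (s k m : ℕ) : ℕ∞ :=
  sSup {c : ℕ∞ | ∃ S : List ℕ, IsADS s k m S ∧ c = (S.toFinset.card : ℕ∞)}

/-- `S` is `r`-sparse: any at most `r` consecutive entries are pairwise distinct. -/
def Sparse (r : ℕ) (S : List ℕ) : Prop :=
  ∀ l : List ℕ, l <:+: S → l.length ≤ r → l.Nodup

/-- `S` contains the pattern `u`: some subsequence of `S` is an injectively renamed
copy of `u`. -/
def ContainsPat (S u : List ℕ) : Prop :=
  ∃ f : ℕ → ℕ, Set.InjOn f {a | a ∈ u} ∧ (u.map f).Sublist S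

/-- `Ex_u(n)`: maximum length of an `r`-sparse `u`-free sequence on at most `n`
distinct symbols, where `r` is the number of distinct symbols of `u`. -/
noncomputable def ExDS (u : List ℕ) (n : ℕ) : ℕ :=
  sSup {L | ∃ S : List ℕ, Sparse u.toFinset.card S ∧ ¬ ContainsPat S u ∧
    S.toFinset.card ≤ n ∧ S.length = L}

/-- An `(r,s)`-formation: a concatenation of `s` permutations of a single set of
`r` distinct symbols. -/
def IsFormation (r s : ℕ) (F : List ℕ) : Prop :=
  ∃ A : Finset ℕ, A.card = r ∧ ∃ Bs : List (List ℕ), Bs.length = s ∧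
    (∀ B ∈ Bs, B.Nodup ∧ B.toFinset = A) ∧ F = Bs.flatten

/-- An `(r,s)`-formation-free sequence: `r`-sparse and containing no
`(r,s)`-formation as a subsequence. -/
def FormationFree (r s : ℕ) (S : List ℕ) : Prop :=
  Sparse r S ∧ ¬ ∃ F : List ℕ, IsFormation r s F ∧ F.Sublist S

/-- `F_{r,s}(n)`: maximum length of an `(r,s)`-formation-free sequence on at most
`n` distinct symbols. -/
noncomputable def FDS (r s n : ℕ) : ℕ :=
  sSup {L | ∃ S : List ℕ, FormationFree r s S ∧ S.toFinset.card ≤ n ∧ S.length = L}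

/-!
Cut the at most `m` blocks into `b = ⌈m/t⌉` consecutive groups of at most `t` blocks.
A symbol occurring in at least `k₃` groups survives in the concatenation of the deduplicated
groups, an `ADS^s_{k₃}(b)`-sequence. Every other symbol occurs often inside a single group:
either it lives in one group and occurs there at least `k` times, or it occurs at least `k₁`
times in its first or last group, or at least `k₂` times in one of its at most `k₃ - 3` middle
groups, since otherwise it occurs at most `2(k₁ - 1) + (k₃ - 3)(k₂ - 1) = k - 1` times.
Inside a group, the symbols of each kind form an `ADS`-sequence with at most `t` blocks; for
those that also occur after (or before) the group an alternation extends by one letter, and for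
those occurring on both sides by two, which lowers the order to `s - 1` and `s - 2`.
-/

open Finset

theorem altList_succ (a b l : ℕ) :
    ∃ c, (c = a ∨ c = b) ∧ altList a b (l + 1) = altList a b l ++ [c] := by
  induction l generalizing a b with
  | zero => exact ⟨a, .inl rfl, rfl⟩
  | succ l ih =>
    obtain ⟨c, hc, h⟩ := ih b a
    exact ⟨c, hc.symm, by rw [altList, h, altList, List.cons_append]⟩

theorem left_mem_altList (a b : ℕ) {l : ℕ} (hl : 1 ≤ l) : a ∈ altList a b l := by
  match l, hl with
  | _ + 1, _ => exact List.mem_cons_self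

theorem right_mem_altList (a b : ℕ) {l : ℕ} (hl : 2 ≤ l) : b ∈ altList a b l := by
  match l, hl with
  | _ + 2, _ => simp [altList]

theorem HasAlt.mono {S T : List ℕ} {l : ℕ} (h : HasAlt S l) (hST : S.Sublist T) : HasAlt T l :=
  let ⟨a, b, hab, hS⟩ := h
  ⟨a, b, hab, hS.trans hST⟩

theorem HasAlt.append_right {W Q : List ℕ} {l : ℕ} (h : HasAlt W l) (hl : 2 ≤ l)
    (hQ : ∀ a ∈ W, a ∈ Q) : HasAlt (W ++ Q) (l + 1) := by
  obtain ⟨a, b, hab, hW⟩ := h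
  obtain ⟨c, hc, heq⟩ := altList_succ a b l
  refine ⟨a, b, hab, heq ▸ hW.append (List.singleton_sublist.2 (hQ c ?_))⟩
  rcases hc with rfl | rfl
  exacts [hW.subset (left_mem_altList _ _ (by omega)), hW.subset (right_mem_altList _ _ hl)]

theorem HasAlt.append_left {P W : List ℕ} {l : ℕ} (h : HasAlt W l) (hl : 2 ≤ l)
    (hP : ∀ a ∈ W, a ∈ P) : HasAlt (P ++ W) (l + 1) := by
  obtain ⟨a, b, hab, hW⟩ := h
  exact ⟨b, a, hab.symm,
    (List.singleton_sublist.2 (hP b (hW.subset (right_mem_altList _ _ hl)))).append hW⟩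

theorem HasAlt.append_left_right {P W Q : List ℕ} {l : ℕ} (h : HasAlt W l) (hl : 2 ≤ l)
    (hP : ∀ a ∈ W, a ∈ P) (hQ : ∀ a ∈ W, a ∈ Q) : HasAlt (P ++ W ++ Q) (l + 2) := by
  obtain ⟨a, b, hab, hW⟩ := h
  have ha := hW.subset (left_mem_altList a b (by omega))
  have hb := hW.subset (right_mem_altList a b hl)
  obtain ⟨c, hc, heq⟩ := altList_succ b a (l + 1)
  refine ⟨b, a, hab.symm, heq ▸ ((List.singleton_sublist.2 (hP b hb)).append hW).append
    (List.singleton_sublist.2 (hQ c ?_))⟩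
  rcases hc with rfl | rfl
  exacts [hb, ha]

theorem HasBlocks.filter {S : List ℕ} {m : ℕ} (h : HasBlocks S m) (p : ℕ → Bool) :
    HasBlocks (S.filter p) m := by
  obtain ⟨Bs, hlen, rfl, hnd⟩ := h
  exact ⟨Bs.map (List.filter p), by simpa using hlen, List.filter_flatten,
    by simpa using fun B hB => (hnd B hB).filter p⟩

theorem List.flatten_map_sublist {α : Type*} {f : List α → List α} (hf : ∀ l, (f l).Sublist l)
    (L : List (List α)) : (L.map f).flatten.Sublist L.flatten := by
  induction L with
  | nil => simp
  | cons l L ih => simpa using (hf l).append ih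

theorem List.exists_chunks {α : Type*} {t : ℕ} (ht : 0 < t) (l : List α) :
    ∃ L : List (List α), L.flatten = l ∧ L.length * t ≤ l.length + t - 1 ∧
      ∀ c ∈ L, c.length ≤ t := by
  induction h : l.length using Nat.strong_induction_on generalizing l with
  | _ n ih =>
  by_cases hne : l = []
  · exact ⟨[], hne.symm, by simp, by simp⟩
  have hn : 0 < n := h ▸ List.length_pos_iff.2 hne
  by_cases hnt : n ≤ t
  · exact ⟨[l], by simp, by simp; omega, by simpa [h]⟩
  obtain ⟨L, hL, hlen, hLt⟩ := ih (n - t) (by omega) (l.drop t) (by simp [h])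
  refine ⟨l.take t :: L, by simp [hL], ?_, ?_⟩
  · rw [List.length_cons, add_mul, one_mul]
    omega
  · simpa using And.intro (List.length_take_le t l) hLt

theorem HasBlocks.exists_groups {S : List ℕ} {m t : ℕ} (h : HasBlocks S m) (ht : 0 < t) :
    ∃ Gs : List (List ℕ), S = Gs.flatten ∧ Gs.length ≤ (m + t - 1) / t ∧
      ∀ G ∈ Gs, HasBlocks G t := by
  obtain ⟨Bs, hlen, rfl, hnd⟩ := h
  obtain ⟨L, rfl, hL, hLt⟩ := Bs.exists_chunks ht
  refine ⟨L.map List.flatten, List.flatten_flatten, ?_, ?_⟩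
  · rw [List.length_map, Nat.le_div_iff_mul_le ht]
    omega
  · simp only [List.mem_map, forall_exists_index, and_imp, forall_apply_eq_imp_iff₂]
    exact fun c hc => ⟨c, hLt c hc, rfl,
      fun B hB => hnd B (List.mem_flatten.2 ⟨c, hc, hB⟩)⟩

theorem NADS_mono {s k m m' : ℕ} (h : m ≤ m') : NADS s k m ≤ NADS s k m' :=
  sSup_le_sSup fun _ ⟨S, ⟨⟨Bs, hl, hS⟩, hc⟩, hcS⟩ => ⟨S, ⟨⟨Bs, hl.trans h, hS⟩, hc⟩, hcS⟩

theorem Finset.sum_le_two_mul_add_card_sub_two_mul {ι : Type*} [DecidableEq ι] {J : Finset ι}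
    {f : ι → ℤ} {i₀ i₁ : ι} (hne : i₀ ≠ i₁) (h₀ : i₀ ∈ J) (h₁ : i₁ ∈ J) {A B : ℤ}
    (hA₀ : f i₀ ≤ A) (hA₁ : f i₁ ≤ A) (hB : ∀ i ∈ J, i ≠ i₀ → i ≠ i₁ → f i ≤ B) :
    ∑ i ∈ J, f i ≤ 2 * A + (#J - 2 : ℤ) * B := by
  have h₁' : i₁ ∈ J.erase i₀ := mem_erase.2 ⟨hne.symm, h₁⟩
  have hrest : ∑ i ∈ (J.erase i₀).erase i₁, f i ≤ #((J.erase i₀).erase i₁) • B :=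
    sum_le_card_nsmul _ _ _ fun i hi => by
      simp only [mem_erase] at hi
      exact hB i hi.2.2 hi.2.1 hi.1
  have hcard : (#((J.erase i₀).erase i₁) : ℤ) = #J - 2 := by
    have := card_erase_add_one h₀
    have := card_erase_add_one h₁'
    omega
  rw [nsmul_eq_mul, hcard] at hrest
  rw [← add_sum_erase J f h₀, ← add_sum_erase _ f h₁']
  linarith

namespace NADS

def heavy (k : ℕ) (W : List ℕ) : Finset ℕ := W.toFinset.filter (k ≤ W.count ·)

theorem mem_heavy {k a : ℕ} {W : List ℕ} : a ∈ heavy k W ↔ a ∈ W ∧ k ≤ W.count a := by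
  simp [heavy]

theorem mem_heavy_filter {k a : ℕ} {W : List ℕ} {p : ℕ → Bool} :
    a ∈ heavy k (W.filter p) ↔ a ∈ W ∧ p a ∧ k ≤ W.count a := by
  rw [mem_heavy, List.mem_filter]
  constructor
  · rintro ⟨⟨haW, hpa⟩, hk⟩
    exact ⟨haW, hpa, List.count_filter hpa ▸ hk⟩
  · rintro ⟨haW, hpa, hk⟩
    exact ⟨⟨haW, hpa⟩, (List.count_filter hpa).symm ▸ hk⟩

theorem card_heavy_le_NADS {s k t : ℕ} {W : List ℕ} (hW : HasBlocks W t)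
    (h : ¬HasAlt W (s + 2)) : ((heavy k W).card : ℕ∞) ≤ NADS s k t := by
  let W' := W.filter (k ≤ W.count ·)
  have hW' : W'.toFinset = heavy k W := by ext; simp [W', heavy]
  refine hW' ▸ le_sSup ⟨W', ⟨hW.filter _, fun a ha => ?_,
    fun h' => h (h'.mono List.filter_sublist)⟩, rfl⟩
  have hka := (List.mem_filter.1 ha).2
  rw [show W'.count a = W.count a from List.count_filter hka]
  simpa using hka

section Groups

variable (Gs : List (List ℕ))

def before (j : ℕ) : List ℕ := (Gs.take j).flatten

def after (j : ℕ) : List ℕ := (Gs.drop (j + 1)).flatten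

def groupsContaining (a : ℕ) : Finset (Fin Gs.length) := univ.filter (a ∈ Gs[·])

theorem flatten_eq_before_append_after (j : Fin Gs.length) :
    Gs.flatten = before Gs j ++ Gs[j] ++ after Gs j := by
  rw [before, after, List.append_assoc, ← List.flatten_cons, Fin.getElem_fin,
    ← List.drop_eq_getElem_cons j.2, ← List.flatten_append, List.take_append_drop]

variable {Gs}

theorem mem_before {i j : Fin Gs.length} {a : ℕ} (hij : i < j) (ha : a ∈ Gs[i]) :
    a ∈ before Gs j :=
  List.mem_flatten.2 ⟨Gs[i], List.mem_take_iff_getElem.2 ⟨i, by omega, rfl⟩, ha⟩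

theorem mem_after {i j : Fin Gs.length} {a : ℕ} (hij : i < j) (ha : a ∈ Gs[j]) :
    a ∈ after Gs i :=
  List.mem_flatten.2 ⟨Gs[j], List.mem_drop_iff_getElem.2 ⟨j - (i + 1), by omega,
    by congr 1; omega⟩, ha⟩

theorem count_flatten_eq_sum (a : ℕ) :
    Gs.flatten.count a = ∑ j ∈ groupsContaining Gs a, Gs[j].count a := by
  rw [groupsContaining, sum_filter_of_ne fun j _ h => List.count_pos_iff.1 (Nat.pos_of_ne_zero h),
    List.count_flatten, ← Fin.sum_univ_fun_getElem]
  rfl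

theorem count_flatten_map_dedup (a : ℕ) :
    (Gs.map List.dedup).flatten.count a = (groupsContaining Gs a).card := by
  rw [List.count_flatten, List.map_map, ← Fin.sum_univ_fun_getElem, groupsContaining,
    card_filter]
  simp [List.count_dedup]

end Groups

def groupFamily (k k₁ k₂ : ℕ) (P G Q : List ℕ) : Finset ℕ :=
  heavy k G ∪ heavy k₁ (G.filter (· ∈ Q)) ∪ heavy k₁ (G.filter (· ∈ P)) ∪
    heavy k₂ (G.filter fun a => a ∈ P ∧ a ∈ Q)

theorem mem_groupFamily {k k₁ k₂ a : ℕ} {P G Q : List ℕ} :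
    a ∈ groupFamily k k₁ k₂ P G Q ↔ a ∈ G ∧ (k ≤ G.count a ∨ a ∈ Q ∧ k₁ ≤ G.count a ∨
      a ∈ P ∧ k₁ ≤ G.count a ∨ a ∈ P ∧ a ∈ Q ∧ k₂ ≤ G.count a) := by
  rw [groupFamily, mem_union, mem_union, mem_union, mem_heavy_filter, mem_heavy_filter,
    mem_heavy_filter, mem_heavy]
  simp only [decide_eq_true_eq]
  tauto

theorem card_groupFamily_le {r k k₁ k₂ t : ℕ} {P G Q : List ℕ} (hG : HasBlocks G t)
    (h : ¬HasAlt (P ++ G ++ Q) (r + 4)) :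
    ((groupFamily k k₁ k₂ P G Q).card : ℕ∞) ≤
      NADS (r + 2) k t + 2 * NADS (r + 1) k₁ t + NADS r k₂ t := by
  have hp {q : ℕ → Prop} [DecidablePred q] {a : ℕ} (ha : a ∈ G.filter (q ·)) : q a :=
    of_decide_eq_true (List.mem_filter.1 ha).2
  have hloc : ((heavy k G).card : ℕ∞) ≤ NADS (r + 2) k t :=
    card_heavy_le_NADS hG fun h' => h (h'.mono ((List.sublist_append_right P G).trans
      (List.sublist_append_left _ Q)))
  have hfirst : ((heavy k₁ (G.filter (· ∈ Q))).card : ℕ∞) ≤ NADS (r + 1) k₁ t :=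
    card_heavy_le_NADS (hG.filter _) fun h' => h ((h'.append_right (by omega) fun _ => hp).mono
      ((List.filter_sublist.trans (List.sublist_append_right P G)).append (.refl Q)))
  have hlast : ((heavy k₁ (G.filter (· ∈ P))).card : ℕ∞) ≤ NADS (r + 1) k₁ t :=
    card_heavy_le_NADS (hG.filter _) fun h' => h ((h'.append_left (by omega) fun _ => hp).mono
      (((List.Sublist.refl P).append List.filter_sublist).trans (List.sublist_append_left _ Q)))
  have hmid : ((heavy k₂ (G.filter fun a => a ∈ P ∧ a ∈ Q)).card : ℕ∞) ≤ NADS r k₂ t :=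
    card_heavy_le_NADS (hG.filter _) fun h' => h ((h'.append_left_right (by omega)
      (fun _ ha => (hp ha).1) (fun _ ha => (hp ha).2)).mono
      (((List.Sublist.refl P).append List.filter_sublist).append (.refl Q)))
  calc ((groupFamily k k₁ k₂ P G Q).card : ℕ∞)
      ≤ (heavy k G).card + (heavy k₁ (G.filter (· ∈ Q))).card +
          (heavy k₁ (G.filter (· ∈ P))).card +
            (heavy k₂ (G.filter fun a => a ∈ P ∧ a ∈ Q)).card := by
        norm_cast
        exact (card_union_le _ _).trans (Nat.add_le_add_right ((card_union_le _ _).trans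
          (Nat.add_le_add_right (card_union_le _ _) _)) _)
    _ ≤ NADS (r + 2) k t + NADS (r + 1) k₁ t + NADS (r + 1) k₁ t + NADS r k₂ t := by
        gcongr
    _ = NADS (r + 2) k t + 2 * NADS (r + 1) k₁ t + NADS r k₂ t := by ring

theorem mem_groupFamily_or_mem_heavy {k k₁ k₂ k₃ : ℕ} (hk₂ : 1 ≤ k₂)
    (hk : (k : ℤ) = k₂ * k₃ + 2 * k₁ - 3 * k₂ - k₃ + 2) {Gs : List (List ℕ)} {a : ℕ}
    (ha : a ∈ Gs.flatten) (hcount : k ≤ Gs.flatten.count a) :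
    (∃ j : Fin Gs.length, a ∈ groupFamily k k₁ k₂ (before Gs j) Gs[j] (after Gs j)) ∨
      a ∈ heavy k₃ (Gs.map List.dedup).flatten := by
  by_contra! h
  obtain ⟨hfam, hglob⟩ := h
  simp only [mem_groupFamily, not_and, not_or, not_le] at hfam
  set J := groupsContaining Gs a
  have hJ {j : Fin Gs.length} : j ∈ J ↔ a ∈ Gs[j] := by simp [J, groupsContaining]
  have hJk₃ : (#J : ℤ) < k₃ := by
    rw [mem_heavy, count_flatten_map_dedup] at hglob
    have : a ∈ (Gs.map List.dedup).flatten := by simpa using ha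
    exact_mod_cast not_le.1 fun h => hglob ⟨this, h⟩
  have hsum : Gs.flatten.count a = ∑ j ∈ J, Gs[j].count a := count_flatten_eq_sum a
  have hJne : J.Nonempty := by
    obtain ⟨G, hG, haG⟩ := List.mem_flatten.1 ha
    obtain ⟨i, hi, rfl⟩ := List.getElem_of_mem hG
    exact ⟨⟨i, hi⟩, hJ.2 haG⟩
  rcases le_or_gt #J 1 with hJ1 | hJ1
  · obtain ⟨j, hJj⟩ := card_eq_one.1 (le_antisymm hJ1 (card_pos.2 hJne))
    rw [hJj, sum_singleton] at hsum
    exact absurd hcount (not_le.2 (hsum ▸ (hfam j (hJ.1 (hJj ▸ mem_singleton_self j))).1))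
  set i₀ := J.min' hJne
  set i₁ := J.max' hJne
  have hlt : i₀ < i₁ := min'_lt_max'_of_card J hJ1
  have ha₀ : a ∈ Gs[i₀] := hJ.1 (min'_mem J hJne)
  have ha₁ : a ∈ Gs[i₁] := hJ.1 (max'_mem J hJne)
  have hbound := Finset.sum_le_two_mul_add_card_sub_two_mul (f := fun j => (Gs[j].count a : ℤ))
    hlt.ne (min'_mem J hJne) (max'_mem J hJne) (A := k₁ - 1) (B := k₂ - 1)
    (by have := (hfam i₀ ha₀).2.1 (mem_after hlt ha₁); omega)
    (by have := (hfam i₁ ha₁).2.2.1 (mem_before hlt ha₀); omega)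
    (fun i hi h₀ h₁ => by
      have := (hfam i (hJ.1 hi)).2.2.2
        (mem_before (lt_of_le_of_ne (min'_le J i hi) (Ne.symm h₀)) ha₀)
        (mem_after (lt_of_le_of_ne (le_max' J i hi) h₁) ha₁)
      omega)
  have hmid : (#J - 2 : ℤ) * (k₂ - 1) ≤ (k₃ - 3) * (k₂ - 1) :=
    mul_le_mul_of_nonneg_right (by omega) (by omega)
  have : (k : ℤ) ≤ ∑ j ∈ J, (Gs[j].count a : ℤ) := by exact_mod_cast hsum ▸ hcount
  linarith

theorem card_toFinset_flatten_le {r k k₁ k₂ k₃ t : ℕ} (hk₂ : 1 ≤ k₂)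
    (hk : (k : ℤ) = k₂ * k₃ + 2 * k₁ - 3 * k₂ - k₃ + 2) {Gs : List (List ℕ)}
    (hGs : ∀ G ∈ Gs, HasBlocks G t) (hcount : ∀ a ∈ Gs.flatten, k ≤ Gs.flatten.count a)
    (halt : ¬HasAlt Gs.flatten (r + 4)) :
    (Gs.flatten.toFinset.card : ℕ∞) ≤
      Gs.length * (NADS (r + 2) k t + 2 * NADS (r + 1) k₁ t + NADS r k₂ t) +
        NADS (r + 2) k₃ Gs.length := by
  let F (j : Fin Gs.length) := groupFamily k k₁ k₂ (before Gs j) Gs[j] (after Gs j)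
  have hcover :
      Gs.flatten.toFinset ⊆ univ.biUnion F ∪ heavy k₃ (Gs.map List.dedup).flatten := by
    intro a ha
    rw [List.mem_toFinset] at ha
    simpa [F] using mem_groupFamily_or_mem_heavy hk₂ hk ha (hcount a ha)
  have hF (j : Fin Gs.length) : ((F j).card : ℕ∞) ≤
      NADS (r + 2) k t + 2 * NADS (r + 1) k₁ t + NADS r k₂ t :=
    card_groupFamily_le (hGs _ (List.getElem_mem _))
      (flatten_eq_before_append_after Gs j ▸ halt)
  have hglobal :
      ((heavy k₃ (Gs.map List.dedup).flatten).card : ℕ∞) ≤ NADS (r + 2) k₃ Gs.length :=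
    card_heavy_le_NADS ⟨Gs.map List.dedup, by simp, rfl, by simp [List.nodup_dedup]⟩
      fun h => halt (h.mono (List.flatten_map_sublist List.dedup_sublist Gs))
  calc (Gs.flatten.toFinset.card : ℕ∞)
      ≤ ∑ j, ((F j).card : ℕ∞) + (heavy k₃ (Gs.map List.dedup).flatten).card := by
        norm_cast
        exact (card_le_card hcover).trans ((card_union_le _ _).trans
          (Nat.add_le_add_right card_biUnion_le _))
    _ ≤ _ := add_le_add (sum_le_sum fun j _ => hF j) hglobal
    _ = _ := by rw [sum_const, card_univ, Fintype.card_fin, nsmul_eq_mul]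

end NADS

/-- For `s ≥ 3`, `k₁, k₂ ≥ 1`, `k₃ ≥ 3`, `t ≥ 1`, `m ≥ 1`, with
`k = k₂·k₃ + 2k₁ − 3k₂ − k₃ + 2` and `b = ⌈m/t⌉`:
`N^s_k(m) ≤ b·(N^s_k(t) + 2·N^{s−1}_{k₁}(t) + N^{s−2}_{k₂}(t)) + N^s_{k₃}(b)`. -/
theorem NADS_recurrence :
    ∀ s k k₁ k₂ k₃ t m : ℕ, 3 ≤ s → 1 ≤ k₁ → 1 ≤ k₂ → 3 ≤ k₃ → 1 ≤ t → 1 ≤ m →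
      (k : ℤ) = k₂ * k₃ + 2 * k₁ - 3 * k₂ - k₃ + 2 →
      NADS s k m ≤
        (((m + t - 1) / t : ℕ) : ℕ∞)
            * (NADS s k t + 2 * NADS (s - 1) k₁ t + NADS (s - 2) k₂ t)
          + NADS s k₃ ((m + t - 1) / t) := by
  intro s k k₁ k₂ k₃ t m hs _ hk₂ _ ht _ hk
  obtain ⟨r, rfl⟩ : ∃ r, s = r + 2 := ⟨s - 2, by omega⟩
  refine sSup_le ?_
  rintro _ ⟨S, ⟨hblocks, hcount, halt⟩, rfl⟩
  obtain ⟨Gs, rfl, hlen, hGs⟩ := hblocks.exists_groups ht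
  calc (Gs.flatten.toFinset.card : ℕ∞)
      ≤ Gs.length * (NADS (r + 2) k t + 2 * NADS (r + 1) k₁ t + NADS r k₂ t) +
          NADS (r + 2) k₃ Gs.length :=
        NADS.card_toFinset_flatten_le hk₂ hk hGs hcount halt
    _ ≤ ((m + t - 1) / t : ℕ) * (NADS (r + 2) k t + 2 * NADS (r + 1) k₁ t + NADS r k₂ t) +
          NADS (r + 2) k₃ ((m + t - 1) / t) := by
        gcongr
        exact NADS_mono hlen
end

section
/- Let u be a finite sequence with exactly r distinct symbols and length s, where s ≥ r ≥ 2. Then for every integer n ≥ 1, Ex_u(n) ≤ F_{r, s−r+1}(n). -/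
/-!
Every `(r, s - r + 1)`-formation contains `u`, so an `r`-sparse `u`-free sequence is
`(r, s - r + 1)`-formation-free. Reading `u` from the back: a symbol already seen is matched in
the last block; a new symbol is matched with the last entry `c` of the last block, and deleting
`c` from every block leaves a formation on one symbol fewer, with as many blocks, for the rest
of `u`. Comparing the two suprema also needs `F_{r,k}(n)` to be finite: by sparsity, disjoint
consecutive windows of length `r` are permutations, and among more than `k 2ⁿ` of them `k` share
a symbol set.
-/

theorem List.exists_lt_countP_of_mul_lt_length {α β : Type*} [DecidableEq β] {L : List α}
    {t : Finset β} {f : α → β} {k : ℕ} (hf : ∀ a ∈ L, f a ∈ t) (h : t.card * k < L.length) :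
    ∃ y ∈ t, k < L.countP (f · = y) := by
  by_contra! hle
  have hcount : ∑ y ∈ t, L.countP (f · = y) = L.length := by
    have hmap (y : β) : (L.map f).count y = L.countP (f · = y) := by
      rw [List.count_eq_countP, List.countP_map]
      exact List.countP_congr fun _ _ => by simp
    simpa [hmap] using Multiset.sum_count_eq_card (s := t) (m := (L.map f : Multiset β))
      (by simpa using hf)
  have := Finset.sum_le_card_nsmul t _ k hle
  simp only [hcount, smul_eq_mul] at this
  omega

section Blocks

variable {α : Type*}

theorem List.Nodup.toFinset_erase [DecidableEq α] {l : List α} (hl : l.Nodup) (a : α) :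
    (l.erase a).toFinset = l.toFinset.erase a := by
  ext
  simp [hl.mem_erase_iff]

theorem mem_of_mem_flatten_of_toFinset_eq [DecidableEq α] {Bs : List (List α)} {A : Finset α}
    (hBs : ∀ B ∈ Bs, B.toFinset = A) {y : α} (hy : y ∈ Bs.flatten) : y ∈ A := by
  obtain ⟨B, hB, hyB⟩ := List.mem_flatten.mp hy
  simpa [← hBs B hB] using hyB

theorem perms_map_erase [DecidableEq α] {Bs : List (List α)} {A : Finset α}
    (hperm : ∀ B ∈ Bs, B.Nodup ∧ B.toFinset = A) (c : α) :
    ∀ C ∈ Bs.map (·.erase c), C.Nodup ∧ C.toFinset = A.erase c := by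
  simp only [List.mem_map, forall_exists_index, and_imp, forall_apply_eq_imp_iff₂]
  intro B hB
  obtain ⟨hnodup, hBA⟩ := hperm B hB
  exact ⟨hnodup.erase c, by rw [hnodup.toFinset_erase, hBA]⟩

def fullBlocks (r : ℕ) (S : List α) : List (List α) :=
  (List.range (S.length / r)).map fun i => (S.drop (i * r)).take r

theorem flatten_map_range_take_drop (r : ℕ) (S : List α) (m : ℕ) :
    ((List.range m).map fun i => (S.drop (i * r)).take r).flatten = S.take (m * r) := by
  induction m with
  | zero => simp
  | succ m ih => simp [List.range_succ, ih, Nat.succ_mul, List.take_add]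

theorem flatten_fullBlocks_sublist (r : ℕ) (S : List α) : (fullBlocks r S).flatten.Sublist S := by
  rw [fullBlocks, flatten_map_range_take_drop]
  exact List.take_sublist _ _

theorem length_fullBlocks (r : ℕ) (S : List α) : (fullBlocks r S).length = S.length / r := by
  simp [fullBlocks]

theorem infix_and_length_of_mem_fullBlocks {r : ℕ} {S B : List α} (hB : B ∈ fullBlocks r S) :
    B <:+: S ∧ B.length = r := by
  obtain ⟨i, hi, rfl⟩ := List.mem_map.mp hB
  have hir : (i + 1) * r ≤ S.length := by
    rcases Nat.eq_zero_or_pos r with rfl | hr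
    · simp at hi
    · exact (Nat.le_div_iff_mul_le hr).mp (List.mem_range.mp hi)
  refine ⟨(List.take_prefix _ _).isInfix.trans (List.drop_suffix _ _).isInfix, ?_⟩
  simp only [List.length_take, List.length_drop]
  rw [Nat.succ_mul] at hir
  omega

end Blocks

theorem ContainsPat.of_sublist {S T u : List ℕ} (h : ContainsPat S u) (hST : S.Sublist T) :
    ContainsPat T u :=
  let ⟨f, hf, hsub⟩ := h
  ⟨f, hf, hsub.trans hST⟩

theorem ContainsPat.append_of_mem {S B u : List ℕ} {x : ℕ} (h : ContainsPat S u) (hx : x ∈ u)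
    (hSB : ∀ y ∈ S, y ∈ B) : ContainsPat (S ++ B) (u ++ [x]) := by
  obtain ⟨f, hf, hsub⟩ := h
  have hset : {a | a ∈ u ++ [x]} = {a | a ∈ u} :=
    Set.ext fun a => by simpa using or_iff_left_of_imp fun h : a = x => h ▸ hx
  refine ⟨f, hset ▸ hf, ?_⟩
  have hfx : f x ∈ B := hSB _ (hsub.subset (List.mem_map_of_mem hx))
  simpa using hsub.append (List.singleton_sublist.mpr hfx)

theorem ContainsPat.append_singleton_of_notMem {S u : List ℕ} {x c : ℕ} (h : ContainsPat S u)
    (hx : x ∉ u) (hc : c ∉ S) : ContainsPat (S ++ [c]) (u ++ [x]) := by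
  obtain ⟨f, hf, hsub⟩ := h
  have hfc : c ∉ f '' {a | a ∈ u} := by
    rintro ⟨a, ha, rfl⟩
    exact hc (hsub.subset (List.mem_map_of_mem ha))
  have hupd : Set.EqOn f (Function.update f x c) {a | a ∈ u} :=
    fun a ha => (Function.update_of_ne (ne_of_mem_of_not_mem ha hx) _ _).symm
  refine ⟨Function.update f x c, ?_, ?_⟩
  · have hset : {a | a ∈ u ++ [x]} = insert x {a | a ∈ u} := by ext; simp [or_comm]
    rw [hset, Set.injOn_insert (s := {a | a ∈ u}) hx, ← hupd.image_eq, Function.update_self]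
    exact ⟨hf.congr hupd, hfc⟩
  · simpa [List.map_congr_left hupd] using hsub.append_right [c]

theorem containsPat_flatten_of_perms {u : List ℕ} {A : Finset ℕ} {Bs : List (List ℕ)}
    (hA : u.toFinset.card ≤ A.card) (hBs : u.length - u.toFinset.card + 1 ≤ Bs.length)
    (hperm : ∀ B ∈ Bs, B.Nodup ∧ B.toFinset = A) : ContainsPat Bs.flatten u := by
  induction u using List.reverseRecOn generalizing A Bs with
  | nil => exact ⟨id, by simp, by simp⟩
  | append_singleton u x ih =>
    obtain ⟨Bs, B, rfl⟩ : ∃ Bs' B, Bs = Bs' ++ [B] := by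
      rcases Bs.eq_nil_or_concat with rfl | ⟨Bs', B, rfl⟩
      · simp at hBs
      · exact ⟨Bs', B, List.concat_eq_append⟩
    obtain ⟨hBnodup, hBA⟩ := hperm B (by simp)
    have hperm' B' (hB' : B' ∈ Bs) := hperm B' (List.mem_append_left _ hB')
    have hu := u.toFinset_card_le
    by_cases hx : x ∈ u
    · have hcard : (u ++ [x]).toFinset.card = u.toFinset.card := by
        simp [List.toFinset_append, hx]
      simp only [List.length_append, List.length_singleton, hcard] at hA hBs
      simpa using (ih hA (by omega) hperm').append_of_mem hx fun y hy => by
        simpa [← List.mem_toFinset, hBA] using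
          mem_of_mem_flatten_of_toFinset_eq (fun B' hB' => (hperm' B' hB').2) hy
    · have hcard : (u ++ [x]).toFinset.card = u.toFinset.card + 1 := by
        simp [List.toFinset_append, hx]
      simp only [List.length_append, List.length_singleton, hcard] at hA hBs
      obtain ⟨B, c, rfl⟩ : ∃ B' c, B = B' ++ [c] := by
        rcases B.eq_nil_or_concat with rfl | ⟨B', c, rfl⟩
        · simp [← hBA] at hA
        · exact ⟨B', c, List.concat_eq_append⟩
      have hcA : c ∈ A := by simp [← hBA]
      have hcB : c ∉ B := fun h => (List.nodup_append.mp hBnodup).2.2 c h c (by simp) rfl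
      have hblocks : (Bs ++ [B ++ [c]]).map (·.erase c) = Bs.map (·.erase c) ++ [B] := by
        simp [List.erase_append_right _ hcB]
      have hpermC : ∀ C ∈ Bs.map (·.erase c) ++ [B], C.Nodup ∧ C.toFinset = A.erase c := by
        simpa only [← hblocks] using perms_map_erase hperm c
      have hc : c ∉ (Bs.map (·.erase c) ++ [B]).flatten := fun h =>
        Finset.notMem_erase c A
          (mem_of_mem_flatten_of_toFinset_eq (fun C hC => (hpermC C hC).2) h)
      have herase : (Bs.map (·.erase c)).flatten.Sublist Bs.flatten := by
        simpa [List.flatMap_def] using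
          List.Sublist.flatMap_right Bs fun B _ => List.erase_sublist (a := c) (l := B)
      refine ((ih (by rw [Finset.card_erase_of_mem hcA]; omega) (by simp; omega)
        hpermC).append_singleton_of_notMem hx hc).of_sublist ?_
      simpa using herase.append_right (B ++ [c])

theorem IsFormation.containsPat {u F : List ℕ}
    (hF : IsFormation u.toFinset.card (u.length - u.toFinset.card + 1) F) : ContainsPat F u := by
  obtain ⟨A, hA, Bs, hBs, hperm, rfl⟩ := hF
  exact containsPat_flatten_of_perms hA.ge hBs.ge hperm

theorem formationFree_of_not_containsPat {u S : List ℕ} (hS : Sparse u.toFinset.card S)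
    (hu : ¬ ContainsPat S u) : FormationFree u.toFinset.card (u.length - u.toFinset.card + 1) S :=
  ⟨hS, fun ⟨_, hF, hFS⟩ => hu (hF.containsPat.of_sublist hFS)⟩

theorem FormationFree.length_div_le {r k : ℕ} {S : List ℕ} (hS : FormationFree r k S) :
    S.length / r ≤ k * 2 ^ S.toFinset.card := by
  by_contra! hlt
  have hblock : ∀ B ∈ fullBlocks r S, B.Nodup ∧ B.length = r ∧ B.toFinset ∈ S.toFinset.powerset :=
    fun B hB => by
      obtain ⟨hinf, hlen⟩ := infix_and_length_of_mem_fullBlocks hB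
      exact ⟨hS.1 B hinf hlen.le, hlen, Finset.mem_powerset.mpr fun a ha =>
        List.mem_toFinset.mpr (hinf.subset (List.mem_toFinset.mp ha))⟩
  obtain ⟨A, -, hA⟩ := List.exists_lt_countP_of_mul_lt_length (k := k)
    (fun B hB => (hblock B hB).2.2) (by rw [Finset.card_powerset, length_fullBlocks]; linarith)
  rw [List.countP_eq_length_filter] at hA
  set C := (fullBlocks r S).filter (·.toFinset = A)
  have hC : ∀ B ∈ C, (B.Nodup ∧ B.length = r) ∧ B.toFinset = A := fun B hB => by
    obtain ⟨hB, hBA⟩ := List.mem_filter.mp hB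
    exact ⟨⟨(hblock B hB).1, (hblock B hB).2.1⟩, by simpa using hBA⟩
  obtain ⟨B₀, hB₀⟩ := List.exists_mem_of_length_pos (by omega : 0 < C.length)
  refine hS.2 ⟨(C.take k).flatten, ⟨A, ?_, C.take k, ?_, ?_, rfl⟩, ?_⟩
  · rw [← (hC B₀ hB₀).2, List.toFinset_card_of_nodup (hC B₀ hB₀).1.1, (hC B₀ hB₀).1.2]
  · simp only [List.length_take]
    omega
  · exact fun B hB => ⟨(hC B (List.mem_of_mem_take hB)).1.1, (hC B (List.mem_of_mem_take hB)).2⟩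
  · exact ((List.take_sublist _ _).trans (List.filter_sublist)).flatten.trans
      (flatten_fullBlocks_sublist r S)

theorem bddAbove_length_formationFree {r : ℕ} (hr : 0 < r) (k n : ℕ) :
    BddAbove {L | ∃ S : List ℕ, FormationFree r k S ∧ S.toFinset.card ≤ n ∧ S.length = L} := by
  refine ⟨k * 2 ^ n * r + r, ?_⟩
  rintro _ ⟨S, hS, hn, rfl⟩
  have hdiv : S.length / r ≤ k * 2 ^ n :=
    hS.length_div_le.trans (Nat.mul_le_mul_left k (Nat.pow_le_pow_right two_pos hn))
  have := Nat.lt_div_mul_add (a := S.length) hr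
  have := Nat.mul_le_mul_right r hdiv
  omega

/-- If `u` has exactly `r` distinct symbols and length `s` with `s ≥ r ≥ 2`, then
`Ex_u(n) ≤ F_{r, s−r+1}(n)` for every `n ≥ 1`. -/
theorem Ex_le_F :
    ∀ (u : List ℕ) (r s : ℕ), u.toFinset.card = r → u.length = s → 2 ≤ r → r ≤ s →
      ∀ n : ℕ, 1 ≤ n → ExDS u n ≤ FDS r (s - r + 1) n := by
  rintro u r s rfl rfl hr - n -
  refine csSup_le_csSup' (bddAbove_length_formationFree (by omega) _ _) ?_
  rintro _ ⟨S, hS, hu, hn, rfl⟩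
  exact ⟨S, formationFree_of_not_containsPat hS hu, hn, rfl⟩
end

section
/- For all integers n ≥ 1 and ℓ with 1 ≤ ℓ ≤ n, λ_3(n) ≤ ψ_3(⌈2n/ℓ⌉, n) + 3·n·ℓ. -/
/-!
Call a position of `S` an endpoint if it carries the first or the last occurrence of its
symbol; there are `T ≤ 2n` of them. Cut `S` into `⌈T/ℓ⌉` intervals ("chunks"), each starting at
an endpoint and containing at most `ℓ` endpoints, and keep only the first occurrence of each
symbol inside each chunk.

The key fact is that if `q < q'` carry the same symbol `a`, some endpoint strictly between them
carries the symbol `b` found at `q + 1`: otherwise `b` occurs both before `q` and after `q'`,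
giving an alternation `b a b a b`. Hence a deleted position `i` of a chunk, whose previous
occurrence is `q`, can be charged to the pair (last endpoint `≤ q`, last endpoint of the chunk
carrying the symbol at `q + 1`); these are two different endpoints of the chunk, and the same fact
makes the charge injective. A chunk with `c ≤ ℓ` endpoints therefore loses at most `c (ℓ - 1)`
positions, `2n (ℓ - 1)` in total.

What is left is split into `⌈T/ℓ⌉ ≤ 2n` blocks of distinct symbols; equal neighbours can only meet
at block boundaries, and deleting one entry per block restores a Davenport–Schinzel sequence of
order 3. So `|S| ≤ ψ₃(⌈2n/ℓ⌉, n) + 2n + 2n (ℓ - 1)`.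
-/

namespace DavenportSchinzel

open Finset

section Lists

variable {α : Type*}

theorem exists_sublist_isChain_ne_append {B L : List α} (hB : B.Nodup)
    (hL : L.IsChain (· ≠ ·)) :
    ∃ C, C.Sublist B ∧ (C ++ L).IsChain (· ≠ ·) ∧ B.length ≤ C.length + 1 := by
  by_cases hlast : B.getLast? = L.head?
  · refine ⟨B.dropLast, B.dropLast_sublist, ?_, by simp; omega⟩
    refine (hB.sublist B.dropLast_sublist).isChain.append hL fun x hx y hy => ?_
    rw [← hlast] at hy
    obtain ⟨ys, rfl⟩ := List.getLast?_eq_some_iff.1 hy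
    have hx' : x ∈ ys := by simpa using List.mem_of_getLast? hx
    rintro rfl
    exact List.disjoint_of_nodup_append hB hx' (List.mem_singleton_self x)
  · refine ⟨B, .refl B, hB.isChain.append hL fun x hx y hy => ?_, by simp⟩
    rintro rfl
    exact hlast (by rw [Option.mem_def.1 hx, Option.mem_def.1 hy])

theorem exists_isChain_ne_sublist_flatten (Bs : List (List α)) (hBs : ∀ B ∈ Bs, B.Nodup) :
    ∃ Cs : List (List α), Cs.length = Bs.length ∧ (∀ C ∈ Cs, C.Nodup) ∧
      Cs.flatten.Sublist Bs.flatten ∧ Cs.flatten.IsChain (· ≠ ·) ∧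
      Bs.flatten.length ≤ Cs.flatten.length + Bs.length := by
  induction Bs with
  | nil => exact ⟨[], rfl, by simp, .slnil, .nil, by simp⟩
  | cons B Bs ih =>
    obtain ⟨Cs, hlen, hnodup, hsub, hchain, hcount⟩ := ih fun B' hB' => hBs B' (by simp [hB'])
    have hB : B.Nodup := hBs B (by simp)
    obtain ⟨C, hCB, hCchain, hClen⟩ := exists_sublist_isChain_ne_append hB hchain
    refine ⟨C :: Cs, by simp [hlen], List.forall_mem_cons.2 ⟨hB.sublist hCB, hnodup⟩,
      by simpa using hCB.append hsub, by simpa using hCchain, ?_⟩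
    simp only [List.flatten_cons, List.length_append, List.length_cons]
    omega

theorem filter_le_eq_append {l : List α} {key : α → ℕ}
    (hl : l.Pairwise (key · ≤ key ·)) (K : ℕ) :
    l.filter (key · ≤ K) = l.filter (key · < K) ++ l.filter (key · = K) := by
  induction l with
  | nil => rfl
  | cons x xs ih =>
    rw [List.pairwise_cons] at hl
    rcases lt_trichotomy (key x) K with h | rfl | h
    · simp [h, h.le, h.ne, ih hl.2]
    · have : xs.filter (key · < key x) = [] :=
        List.filter_eq_nil_iff.2 fun y hy => by simpa using hl.1 y hy
      simp [ih hl.2, this]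
    · simp [ih hl.2, h.not_ge, h.not_gt, h.ne']

theorem flatten_map_range_filter_eq {l : List α} {key : α → ℕ}
    (hl : l.Pairwise (key · ≤ key ·)) {K : ℕ} (hK : ∀ a ∈ l, key a < K) :
    ((List.range K).map fun k => l.filter (key · = k)).flatten = l := by
  have hlt (K : ℕ) : ((List.range K).map fun k => l.filter (key · = k)).flatten =
      l.filter (key · < K) := by
    induction K with
    | zero => simp
    | succ K ih => simp [List.range_succ, ih, filter_le_eq_append hl]
  rw [hlt, List.filter_eq_self.2 (by simpa using hK)]

end Lists

theorem _root_.Monotone.apply_eq_of_between {α β : Type*} [Preorder α] [PartialOrder β]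
    {f : α → β} (hf : Monotone f) {a b c : α} (hab : a ≤ b) (hbc : b ≤ c) (h : f a = f c) :
    f b = f c :=
  le_antisymm (hf hbc) (h ▸ hf hab)

section Blocks

variable {S : List ℕ} {m : ℕ}

theorem _root_.HasBlocks.mono (h : HasBlocks S m) {m' : ℕ} (hm : m ≤ m') : HasBlocks S m' :=
  let ⟨Bs, hlen, hS, hBs⟩ := h
  ⟨Bs, hlen.trans hm, hS, hBs⟩

theorem _root_.HasBlocks.length_le_mul_card (h : HasBlocks S m) :
    S.length ≤ m * #S.toFinset := by
  obtain ⟨Bs, hlen, rfl, hBs⟩ := h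
  have hB : ∀ k ∈ Bs.map List.length, k ≤ #Bs.flatten.toFinset := by
    simp only [List.mem_map]
    rintro _ ⟨B, hB, rfl⟩
    rw [← List.toFinset_card_of_nodup (hBs B hB)]
    exact card_le_card fun a ha => by simp at ha ⊢; exact ⟨B, hB, ha⟩
  calc Bs.flatten.length = (Bs.map List.length).sum := List.length_flatten
    _ ≤ Bs.length * #Bs.flatten.toFinset := by simpa using List.sum_le_card_nsmul _ _ hB
    _ ≤ m * _ := Nat.mul_le_mul_right _ hlen

theorem _root_.HasBlocks.exists_isChain_ne_sublist (h : HasBlocks S m) :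
    ∃ S', S'.Sublist S ∧ S'.IsChain (· ≠ ·) ∧ HasBlocks S' m ∧ S.length ≤ S'.length + m := by
  obtain ⟨Bs, hlen, rfl, hBs⟩ := h
  obtain ⟨Cs, hCs, hnodup, hsub, hchain, hcount⟩ := exists_isChain_ne_sublist_flatten Bs hBs
  exact ⟨Cs.flatten, hsub, hchain, ⟨Cs, hCs ▸ hlen, rfl, hnodup⟩, by omega⟩

theorem le_psiDS {s n : ℕ} (hS : IsDS s S) (hn : #S.toFinset ≤ n) (hb : HasBlocks S m) :
    S.length ≤ psiDS s m n :=
  le_csSup ⟨m * n, by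
    rintro _ ⟨T, -, hT, hbT, rfl⟩
    exact hbT.length_le_mul_card.trans (Nat.mul_le_mul_left m hT)⟩ ⟨S, hS, hn, hb, rfl⟩

end Blocks

open scoped Classical

section Endpoints

variable (S : List ℕ)

def sym (i : ℕ) : ℕ := S.getD i 0

def IsEndpoint (i : ℕ) : Prop :=
  i < S.length ∧ ((∀ j < i, sym S j ≠ sym S i) ∨ ∀ j < S.length, i < j → sym S j ≠ sym S i)

noncomputable def endpoints : Finset ℕ := (range S.length).filter (IsEndpoint S)

variable {S}

theorem sym_eq_getElem {i : ℕ} (h : i < S.length) : sym S i = S[i] := by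
  simp [sym, List.getD_eq_getElem?_getD, h]

theorem sym_mem {i : ℕ} (h : i < S.length) : sym S i ∈ S := by
  rw [sym_eq_getElem h]; exact List.getElem_mem h

theorem map_sym_range : (List.range S.length).map (sym S) = S :=
  List.ext_getElem (by simp) fun i _ h => by simp [sym_eq_getElem h]

theorem map_sym_sublist {is : List ℕ} (hsorted : is.Pairwise (· < ·))
    (hlt : ∀ i ∈ is, i < S.length) : (is.map (sym S)).Sublist S := by
  have : is.Sublist (List.range S.length) :=
    List.sublist_of_subperm_of_pairwise
      (List.Nodup.subperm (hsorted.imp ne_of_lt) fun i hi => List.mem_range.2 (hlt i hi))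
      hsorted List.pairwise_lt_range
  simpa [map_sym_range] using this.map (sym S)

theorem sym_ne_sym_succ (hS : S.IsChain (· ≠ ·)) {i : ℕ} (h : i + 1 < S.length) :
    sym S i ≠ sym S (i + 1) := by
  rw [sym_eq_getElem (by omega), sym_eq_getElem h]
  exact List.isChain_iff_getElem.1 hS i h

theorem mem_endpoints {i : ℕ} : i ∈ endpoints S ↔ IsEndpoint S i := by
  simp only [endpoints, mem_filter, mem_range, and_iff_right_iff_imp]
  exact And.left

theorem isEndpoint_zero (h : 0 < S.length) : IsEndpoint S 0 :=
  ⟨h, .inl fun j h => absurd h (Nat.not_lt_zero j)⟩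

theorem card_filter_le_card_toFinset {P : ℕ → Prop} [DecidablePred P]
    (hP : ∀ i j, i < j → j < S.length → P i → P j → sym S i ≠ sym S j) :
    #((range S.length).filter P) ≤ #S.toFinset := by
  refine card_le_card_of_injOn (sym S) (fun i hi => ?_) fun i hi j hj hij => ?_
  · simpa using sym_mem (mem_range.1 (mem_filter.1 hi).1)
  · simp only [mem_coe, mem_filter, mem_range] at hi hj
    by_contra hne
    rcases Nat.lt_or_gt_of_ne hne with h | h
    exacts [hP i j h hj.1 hi.2 hj.2 hij, hP j i h hi.1 hj.2 hi.2 hij.symm]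

theorem card_endpoints_le : #(endpoints S) ≤ 2 * #S.toFinset := by
  have hfirsts := card_filter_le_card_toFinset (S := S)
    (P := fun i => ∀ j < i, sym S j ≠ sym S i) fun i j hij _ _ hj => hj i hij
  have hlasts := card_filter_le_card_toFinset (S := S)
    (P := fun i => ∀ j < S.length, i < j → sym S j ≠ sym S i) fun i j hij hj hi _ =>
      (hi j hj hij).symm
  calc #(endpoints S) ≤ #((range S.length).filter fun i => ∀ j < i, sym S j ≠ sym S i) +
        #((range S.length).filter fun i => ∀ j < S.length, i < j → sym S j ≠ sym S i) := by
        refine (card_le_card fun i hi => ?_).trans (card_union_le _ _)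
        obtain ⟨hi, h⟩ := mem_endpoints.1 hi
        simpa [hi] using h
    _ ≤ 2 * #S.toFinset := by omega

theorem exists_isEndpoint_between (hS : IsDS 3 S) {q q' : ℕ} (hq : q < q') (hq' : q' < S.length)
    (hsym : sym S q = sym S q') :
    ∃ p, q < p ∧ p < q' ∧ IsEndpoint S p ∧ sym S p = sym S (q + 1) := by
  have hq1 : q + 1 < q' := by
    by_contra h
    obtain rfl : q' = q + 1 := by omega
    exact sym_ne_sym_succ hS.1 hq' hsym
  set b := sym S (q + 1)
  have hbq : sym S q ≠ b := sym_ne_sym_succ hS.1 (by omega)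
  by_cases hfirst : ∀ j < q + 1, sym S j ≠ b
  · exact ⟨q + 1, by omega, hq1, ⟨by omega, .inl hfirst⟩, rfl⟩
  push Not at hfirst
  obtain ⟨f, hf, hfb⟩ := hfirst
  have hfq : f < q := lt_of_le_of_ne (Nat.le_of_lt_succ hf) (by rintro rfl; exact hbq hfb)
  have hlater : ∀ j, q' < j → j < S.length → sym S j ≠ b := by
    intro j hj hjS hjb
    refine hS.2 ⟨b, sym S q, hbq.symm, ?_⟩
    have := map_sym_sublist (S := S) (is := [f, q, q + 1, q', j]) (by simp; omega) (by simp; omega)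
    simp only [List.map_cons, List.map_nil, hfb, ← hsym, hjb] at this
    exact this
  let p := Nat.findGreatest (fun j => sym S j = b) q'
  have hpb : sym S p = b := Nat.findGreatest_spec (P := fun j => sym S j = b) hq1.le rfl
  have hqp : q + 1 ≤ p := Nat.le_findGreatest hq1.le rfl
  have hpq' : p < q' := lt_of_le_of_ne (Nat.findGreatest_le q')
    (by intro h; rw [h] at hpb; exact hbq (hsym ▸ hpb))
  refine ⟨p, by omega, hpq', ⟨by omega, .inr fun j hj hpj hjb => ?_⟩, hpb⟩
  rcases le_or_gt j q' with hjq | hjq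
  · exact Nat.findGreatest_is_greatest hpj hjq (hjb.trans hpb)
  · exact hlater j hjq hj (hjb.trans hpb)

end Endpoints

section Repeats

variable (S : List ℕ) (c : ℕ → ℕ)

def IsRepeat (i : ℕ) : Prop := ∃ j < i, c j = c i ∧ sym S j = sym S i

noncomputable def prevOcc (i : ℕ) : ℕ := Nat.findGreatest (fun j => j < i ∧ sym S j = sym S i) i

noncomputable def lastEndpointLE (i : ℕ) : ℕ := Nat.findGreatest (IsEndpoint S) i

noncomputable def lastEndpointWith (k b : ℕ) : ℕ :=
  Nat.findGreatest (fun p => IsEndpoint S p ∧ c p = k ∧ sym S p = b) S.length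

noncomputable def charge (i : ℕ) : ℕ × ℕ :=
  (lastEndpointLE S (prevOcc S i), lastEndpointWith S c (c i) (sym S (prevOcc S i + 1)))

variable {S c}

theorem le_prevOcc {i j : ℕ} (hj : j < i) (h : sym S j = sym S i) : j ≤ prevOcc S i :=
  Nat.le_findGreatest hj.le ⟨hj, h⟩

theorem prevOcc_spec {i j : ℕ} (hj : j < i) (h : sym S j = sym S i) :
    prevOcc S i < i ∧ sym S (prevOcc S i) = sym S i :=
  Nat.findGreatest_spec (P := fun j => j < i ∧ sym S j = sym S i) hj.le ⟨hj, h⟩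

theorem eq_of_prevOcc_eq {i i' j j' : ℕ} (hj : j < i) (h : sym S j = sym S i) (hj' : j' < i')
    (h' : sym S j' = sym S i') (heq : prevOcc S i = prevOcc S i') : i = i' := by
  obtain ⟨hlt, hsym⟩ := prevOcc_spec hj h
  obtain ⟨hlt', hsym'⟩ := prevOcc_spec hj' h'
  have hii' : sym S i = sym S i' := by rw [← hsym, heq, hsym']
  by_contra hne
  rcases Nat.lt_or_gt_of_ne hne with hi | hi
  · have := le_prevOcc hi hii'; omega
  · have := le_prevOcc hi hii'.symm; omega

theorem isEndpoint_lastEndpointLE {i : ℕ} (hi : i < S.length) : IsEndpoint S (lastEndpointLE S i) :=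
  Nat.findGreatest_spec i.zero_le (isEndpoint_zero (by omega))

theorem lastEndpointLE_le (i : ℕ) : lastEndpointLE S i ≤ i := Nat.findGreatest_le i

theorem le_lastEndpointLE {p i : ℕ} (hp : IsEndpoint S p) (hpi : p ≤ i) : p ≤ lastEndpointLE S i :=
  Nat.le_findGreatest hpi hp

theorem lastEndpointLE_lt_lastEndpointLE (hS : IsDS 3 S) {q q' : ℕ} (hq : q < q')
    (hq' : q' + 1 < S.length) (hsym : sym S (q + 1) = sym S (q' + 1)) :
    lastEndpointLE S q < lastEndpointLE S q' := by
  obtain ⟨p, hqp, hpq', hp, -⟩ := exists_isEndpoint_between hS (by omega) hq' hsym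
  calc lastEndpointLE S q ≤ q := lastEndpointLE_le q
    _ < p := by omega
    _ ≤ lastEndpointLE S q' := le_lastEndpointLE hp (by omega)

theorem lastEndpointWith_spec {p k b : ℕ} (hp : IsEndpoint S p) (hcp : c p = k)
    (hsym : sym S p = b) :
    IsEndpoint S (lastEndpointWith S c k b) ∧ c (lastEndpointWith S c k b) = k ∧
      sym S (lastEndpointWith S c k b) = b :=
  Nat.findGreatest_spec (P := fun p => IsEndpoint S p ∧ c p = k ∧ sym S p = b) hp.1.le
    ⟨hp, hcp, hsym⟩

theorem le_lastEndpointWith {p k b : ℕ} (hp : IsEndpoint S p) (hcp : c p = k)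
    (hsym : sym S p = b) : p ≤ lastEndpointWith S c k b :=
  Nat.le_findGreatest hp.1.le ⟨hp, hcp, hsym⟩

-- `c i` is the chunk of position `i`: chunks are intervals, each starting at an endpoint.
variable (hc : Monotone c) (hstart : ∀ i < S.length, ∃ p ≤ i, IsEndpoint S p ∧ c p = c i)
include hc

theorem IsRepeat.exists_isEndpoint_gt_prevOcc (hS : IsDS 3 S) {i : ℕ} (hi : i < S.length)
    (hrep : IsRepeat S c i) :
    prevOcc S i < i ∧ c (prevOcc S i) = c i ∧ ∃ p, prevOcc S i < p ∧ IsEndpoint S p ∧ c p = c i ∧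
      sym S p = sym S (prevOcc S i + 1) := by
  obtain ⟨j, hj, hcj, hsymj⟩ := hrep
  obtain ⟨hq, hsymq⟩ := prevOcc_spec hj hsymj
  have hcq : c (prevOcc S i) = c i := hc.apply_eq_of_between (le_prevOcc hj hsymj) hq.le hcj
  obtain ⟨p, hqp, hpi, hp, hsymp⟩ := exists_isEndpoint_between hS hq hi hsymq
  exact ⟨hq, hcq, p, hqp, hp, hc.apply_eq_of_between hqp.le hpi.le hcq, hsymp⟩

include hstart in
theorem charge_mem_offDiag (hS : IsDS 3 S) {i : ℕ} (hi : i < S.length) (hrep : IsRepeat S c i) :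
    charge S c i ∈ ((endpoints S).filter (c · = c i)).offDiag := by
  obtain ⟨hqi, hcq, p, hqp, hp, hcp, hsymp⟩ := hrep.exists_isEndpoint_gt_prevOcc hc hS hi
  set q := prevOcc S i
  obtain ⟨p₀, hp₀q, hp₀, hcp₀⟩ := hstart q (by omega)
  have hcpre : c (lastEndpointLE S q) = c i := (hc.apply_eq_of_between
    (le_lastEndpointLE hp₀ hp₀q) (lastEndpointLE_le q) hcp₀).trans hcq
  have hlt : lastEndpointLE S q < lastEndpointWith S c (c i) (sym S (q + 1)) :=
    calc lastEndpointLE S q ≤ q := lastEndpointLE_le q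
      _ < p := hqp
      _ ≤ _ := le_lastEndpointWith hp hcp hsymp
  obtain ⟨hpost, hcpost, -⟩ := lastEndpointWith_spec hp hcp hsymp
  simp only [charge, mem_offDiag, mem_filter, mem_endpoints]
  exact ⟨⟨isEndpoint_lastEndpointLE (by omega), hcpre⟩, ⟨hpost, hcpost⟩, hlt.ne⟩

theorem charge_injOn (hS : IsDS 3 S) :
    Set.InjOn (charge S c) {i | i < S.length ∧ IsRepeat S c i} := by
  rintro i ⟨hi, hrep⟩ i' ⟨hi', hrep'⟩ heq
  obtain ⟨hq, -, p, -, hp, hcp, hsymp⟩ := hrep.exists_isEndpoint_gt_prevOcc hc hS hi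
  obtain ⟨hq', -, p', -, hp', hcp', hsymp'⟩ := hrep'.exists_isEndpoint_gt_prevOcc hc hS hi'
  simp only [charge, Prod.mk.injEq] at heq
  have hsym : sym S (prevOcc S i + 1) = sym S (prevOcc S i' + 1) := by
    rw [← (lastEndpointWith_spec hp hcp hsymp).2.2, heq.2,
      (lastEndpointWith_spec hp' hcp' hsymp').2.2]
  have hqq : prevOcc S i = prevOcc S i' := by
    by_contra hne
    rcases Nat.lt_or_gt_of_ne hne with h | h
    · exact (lastEndpointLE_lt_lastEndpointLE hS h (by omega) hsym).ne heq.1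
    · exact (lastEndpointLE_lt_lastEndpointLE hS h (by omega) hsym.symm).ne heq.1.symm
  obtain ⟨j, hj, -, hsymj⟩ := hrep
  obtain ⟨j', hj', -, hsymj'⟩ := hrep'
  exact eq_of_prevOcc_eq hj hsymj hj' hsymj' hqq

include hstart in
theorem card_repeats_chunk_le (hS : IsDS 3 S) (k : ℕ) :
    #(((range S.length).filter (IsRepeat S c)).filter (c · = k)) ≤
      #((endpoints S).filter (c · = k)) * (#((endpoints S).filter (c · = k)) - 1) := by
  rw [Nat.mul_sub_one, ← offDiag_card]
  refine card_le_card_of_injOn (charge S c) (fun i hi => ?_)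
    ((charge_injOn hc hS).mono fun i hi => ?_)
  all_goals simp only [mem_coe, mem_filter, mem_range] at hi
  · obtain ⟨⟨hi, hrep⟩, rfl⟩ := hi
    exact charge_mem_offDiag hc hstart hS hi hrep
  · exact hi.1

include hstart in
theorem card_repeats_le (hS : IsDS 3 S) {ℓ : ℕ}
    (hℓ : ∀ k, #((endpoints S).filter (c · = k)) ≤ ℓ) :
    #((range S.length).filter (IsRepeat S c)) ≤ (ℓ - 1) * #(endpoints S) := by
  have hmaps {s : Finset ℕ} (hs : s ⊆ range S.length) :
      Set.MapsTo c s ((range S.length).image c) := fun i hi => mem_image_of_mem c (hs hi)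
  calc _ = ∑ k ∈ (range S.length).image c,
        #(((range S.length).filter (IsRepeat S c)).filter (c · = k)) :=
        card_eq_sum_card_fiberwise (hmaps (filter_subset _ _))
    _ ≤ ∑ k ∈ (range S.length).image c, (ℓ - 1) * #((endpoints S).filter (c · = k)) := by
        refine sum_le_sum fun k _ => (card_repeats_chunk_le hc hstart hS k).trans ?_
        rw [mul_comm]
        exact Nat.mul_le_mul_right _ (Nat.sub_le_sub_right (hℓ k) 1)
    _ = (ℓ - 1) * #(endpoints S) := by
        rw [← mul_sum, ← card_eq_sum_card_fiberwise (hmaps (s := endpoints S) (filter_subset _ _))]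

end Repeats

section Chunks

variable (S : List ℕ) (ℓ : ℕ)

noncomputable def rank (i : ℕ) : ℕ := #((endpoints S).filter (· ≤ i))

noncomputable def chunk (i : ℕ) : ℕ := (rank S i - 1) / ℓ

variable {S ℓ}

theorem rank_mono : Monotone (rank S) := fun _ _ h =>
  card_le_card (monotone_filter_right _ fun _ _ hx => le_trans hx h)

theorem rank_strictMonoOn : StrictMonoOn (rank S) (endpoints S) := by
  intro p _ p' hp' hpp'
  refine card_lt_card ⟨monotone_filter_right _ fun _ _ hx => le_trans hx hpp'.le, fun hsub => ?_⟩
  have := (mem_filter.1 (hsub (mem_filter.2 ⟨hp', le_rfl⟩))).2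
  omega

theorem chunk_mono : Monotone (chunk S ℓ) := fun _ _ h =>
  Nat.div_le_div_right (Nat.sub_le_sub_right (rank_mono h) 1)

theorem rank_lastEndpointLE (i : ℕ) : rank S (lastEndpointLE S i) = rank S i := by
  refine le_antisymm (rank_mono (lastEndpointLE_le i)) (card_le_card fun p hp => ?_)
  simp only [mem_filter, mem_endpoints] at hp ⊢
  exact ⟨hp.1, le_lastEndpointLE hp.1 hp.2⟩

theorem exists_isEndpoint_chunk_eq {i : ℕ} (hi : i < S.length) :
    ∃ p ≤ i, IsEndpoint S p ∧ chunk S ℓ p = chunk S ℓ i :=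
  ⟨lastEndpointLE S i, lastEndpointLE_le i, isEndpoint_lastEndpointLE hi,
    by rw [chunk, chunk, rank_lastEndpointLE]⟩

theorem rank_pos {p : ℕ} (hp : IsEndpoint S p) : 0 < rank S p :=
  card_pos.2 ⟨p, mem_filter.2 ⟨mem_endpoints.2 hp, le_rfl⟩⟩

theorem card_endpoints_chunk_le (hℓ : 0 < ℓ) (k : ℕ) :
    #((endpoints S).filter (chunk S ℓ · = k)) ≤ ℓ := by
  -- within a chunk, `rank - 1` is determined by its remainder mod `ℓ`
  have hinj : Set.InjOn (fun p => (rank S p - 1) % ℓ)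
      ((endpoints S).filter (chunk S ℓ · = k)) := by
    intro p hp p' hp' h
    rw [mem_coe, mem_filter] at hp hp'
    refine rank_strictMonoOn.injOn hp.1 hp'.1 ?_
    have hdiv : (rank S p - 1) / ℓ = (rank S p' - 1) / ℓ := hp.2.trans hp'.2.symm
    have := Nat.div_add_mod (rank S p - 1) ℓ
    have := Nat.div_add_mod (rank S p' - 1) ℓ
    have := rank_pos (mem_endpoints.1 hp.1)
    have := rank_pos (mem_endpoints.1 hp'.1)
    simp only at h
    rw [hdiv, h] at *
    omega
  simpa using card_le_card_of_injOn _ (fun p _ => mem_range.2 (Nat.mod_lt _ hℓ)) hinj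

theorem chunk_lt (hℓ : 0 < ℓ) {i : ℕ} (hi : i < S.length) :
    chunk S ℓ i < (#(endpoints S) + ℓ - 1) / ℓ := by
  have hT : 0 < #(endpoints S) := card_pos.2 ⟨0, mem_endpoints.2 (isEndpoint_zero (by omega))⟩
  have hrank : rank S i ≤ #(endpoints S) := card_le_card (filter_subset _ _)
  rw [show #(endpoints S) + ℓ - 1 = #(endpoints S) - 1 + ℓ by omega, Nat.add_div_right _ hℓ]
  exact Nat.lt_succ_of_le (Nat.div_le_div_right (by omega))

end Chunks

section KeptBlocks

variable (S : List ℕ) (c : ℕ → ℕ)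

noncomputable def keptIndices : List ℕ := (List.range S.length).filter fun i => ¬ IsRepeat S c i

variable {S c}

theorem keptIndices_pairwise_lt : (keptIndices S c).Pairwise (· < ·) :=
  List.pairwise_lt_range.sublist List.filter_sublist

theorem lt_length_of_mem_keptIndices {i : ℕ} (hi : i ∈ keptIndices S c) : i < S.length :=
  List.mem_range.1 (List.mem_filter.1 hi).1

theorem hasBlocks_map_sym_keptIndices (hc : Monotone c) {K : ℕ} (hK : ∀ i < S.length, c i < K) :
    HasBlocks ((keptIndices S c).map (sym S)) K := by
  refine ⟨((List.range K).map fun k => (keptIndices S c).filter (c · = k)).map (List.map (sym S)),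
    by simp, ?_, ?_⟩
  · rw [← List.map_flatten, flatten_map_range_filter_eq (key := c)
      (keptIndices_pairwise_lt.imp fun h => hc h.le)
      fun i hi => hK i (lt_length_of_mem_keptIndices hi)]
  · simp only [List.map_map, List.mem_map, List.mem_range]
    rintro _ ⟨k, -, rfl⟩
    refine List.Nodup.map_on (fun i hi j hj hij => ?_)
      ((keptIndices_pairwise_lt.imp ne_of_lt).sublist List.filter_sublist)
    simp only [keptIndices, List.mem_filter, List.mem_range, decide_eq_true_eq] at hi hj
    by_contra hne
    rcases Nat.lt_or_gt_of_ne hne with h | h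
    exacts [hj.1.2 ⟨i, h, hi.2.trans hj.2.symm, hij⟩, hi.1.2 ⟨j, h, hj.2.trans hi.2.symm, hij.symm⟩]

theorem length_keptIndices_add_card_repeats :
    (keptIndices S c).length + #((range S.length).filter (IsRepeat S c)) = S.length := by
  have : (keptIndices S c).length = #((range S.length).filter (¬ IsRepeat S c ·)) := rfl
  rw [this, add_comm, card_filter_add_card_filter_not, card_range]

end KeptBlocks

theorem exists_sublist_hasBlocks {S : List ℕ} (hS : IsDS 3 S) {ℓ : ℕ} (hℓ : 0 < ℓ) :
    ∃ S₁, S₁.Sublist S ∧ HasBlocks S₁ ((#(endpoints S) + ℓ - 1) / ℓ) ∧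
      S.length ≤ S₁.length + (ℓ - 1) * #(endpoints S) := by
  refine ⟨(keptIndices S (chunk S ℓ)).map (sym S),
    map_sym_sublist keptIndices_pairwise_lt fun _ => lt_length_of_mem_keptIndices,
    hasBlocks_map_sym_keptIndices chunk_mono fun _ => chunk_lt hℓ, ?_⟩
  have := card_repeats_le chunk_mono (fun _ => exists_isEndpoint_chunk_eq) hS
    (card_endpoints_chunk_le hℓ)
  have := length_keptIndices_add_card_repeats (S := S) (c := chunk S ℓ)
  rw [List.length_map]
  omega

theorem length_le_psiDS_add {S : List ℕ} (hS : IsDS 3 S) {n ℓ : ℕ} (hn : #S.toFinset ≤ n)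
    (hℓ : 0 < ℓ) : S.length ≤ psiDS 3 ((2 * n + ℓ - 1) / ℓ) n + 2 * n * ℓ := by
  obtain ⟨S₁, hS₁, hb₁, hlen₁⟩ := exists_sublist_hasBlocks hS hℓ
  obtain ⟨S₂, hS₂, hchain, hb₂, hlen₂⟩ := hb₁.exists_isChain_ne_sublist
  have hsub := hS₂.trans hS₁
  have hT : #(endpoints S) ≤ 2 * n := card_endpoints_le.trans (by omega)
  have hK : (#(endpoints S) + ℓ - 1) / ℓ ≤ (2 * n + ℓ - 1) / ℓ := Nat.div_le_div_right (by omega)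
  have hm : (2 * n + ℓ - 1) / ℓ ≤ 2 * n := by
    have := Nat.le_mul_of_pos_left (2 * n) hℓ
    rw [Nat.div_le_iff_le_mul_add_pred hℓ]
    omega
  have hψ : S₂.length ≤ psiDS 3 ((2 * n + ℓ - 1) / ℓ) n :=
    le_psiDS ⟨hchain, fun ⟨a, b, hab, h⟩ => hS.2 ⟨a, b, hab, h.trans hsub⟩⟩
      ((card_le_card fun a ha => by simpa using hsub.subset (by simpa using ha)).trans hn)
      (hb₂.mono hK)
  have hrep : (ℓ - 1) * #(endpoints S) ≤ (ℓ - 1) * (2 * n) := Nat.mul_le_mul_left _ hT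
  calc S.length ≤ psiDS 3 ((2 * n + ℓ - 1) / ℓ) n + 2 * n + (ℓ - 1) * (2 * n) := by omega
    _ = psiDS 3 ((2 * n + ℓ - 1) / ℓ) n + 2 * n * ℓ := by
      obtain ⟨k, rfl⟩ := Nat.exists_eq_add_one_of_ne_zero hℓ.ne'
      rw [Nat.add_sub_cancel]
      ring

end DavenportSchinzel

/-- For all `n ≥ 1` and `1 ≤ ℓ ≤ n`, `λ_3(n) ≤ ψ_3(⌈2n/ℓ⌉, n) + 3·n·ℓ`. -/
theorem lambda3_to_psi3 :
    ∀ n ℓ : ℕ, 1 ≤ ℓ → ℓ ≤ n →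
      lambdaDS 3 n ≤ psiDS 3 ((2 * n + ℓ - 1) / ℓ) n + 3 * n * ℓ := by
  intro n ℓ hℓ _
  refine csSup_le' ?_
  rintro _ ⟨S, hS, hn, rfl⟩
  calc S.length ≤ psiDS 3 ((2 * n + ℓ - 1) / ℓ) n + 2 * n * ℓ :=
        DavenportSchinzel.length_le_psiDS_add hS hn hℓ
    _ ≤ _ := by gcongr; norm_num
end
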